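/- Let w be a word over Σ = alph(w) with ι(w) ≥ 2 and let u be a nonempty scattered factor of w with |u| < ι(w). If u[1] ≠ m(w)[1], then |C(w,u)| > 1. -/

import Mathlib

/-- An embedding of `u` in `w`: a strictly increasing map of positions of `u`
into positions of `w` such that corresponding letters agree. -/
def IsEmbedding {α : Type*} (w u : List α) (e : Fin u.length → Fin w.length) : Prop :=
  StrictMono e ∧ ∀ i : Fin u.length, u.get i = w.get (e i)

/-- `InShuffle u v w` means `w ∈ u ⧢ v`: `w` has length `|u| + |v|` and admits
embeddings of `u` and of `v` with disjoint images (hence the images partition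
the positions of `w`). -/
def InShuffle {α : Type*} (u v w : List α) : Prop :=
  w.length = u.length + v.length ∧
    ∃ (e₁ : Fin u.length → Fin w.length) (e₂ : Fin v.length → Fin w.length),
      IsEmbedding w u e₁ ∧ IsEmbedding w v e₂ ∧ ∀ i j, e₁ i ≠ e₂ j

/-- The complement scattered factor set `C(w,u)`:
all `v` (necessarily of length `|w| - |u|`) with `w ∈ u ⧢ v`. -/
def CompSet {α : Type*} (w u : List α) : Set (List α) := {v | InShuffle u v w}

/-- An arch factorisation of `w`: `w = ar_1 ⋯ ar_k · rest`, where every arch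
contains every letter of `alph w`, the last letter of each arch does not occur
elsewhere in that arch, and the rest does not contain all letters of `alph w`.
The universality index `ι(w)` equals the number of arches. -/
structure ArchFact {α : Type*} (w : List α) where
  arches : List (List α)
  rest : List α
  join_append : arches.flatten ++ rest = w
  arch_ne : ∀ a ∈ arches, a ≠ []
  arch_alph : ∀ a ∈ arches, ∀ b ∈ w, b ∈ a
  arch_last : ∀ a ∈ arches, ∀ h : a ≠ [], a.getLast h ∉ a.dropLast
  rest_proper : ∃ b ∈ w, b ∉ rest

/-- The modus `m(w)`: the word formed by the last letters of the arches. -/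
def ArchFact.modus {α : Type*} {w : List α} (F : ArchFact w) : List α :=
  F.arches.pmap (fun a (h : a ≠ []) => a.getLast h) F.arch_ne

/-! Let `A` be the first arch of `w = A · z`. Every arch contains every letter of `w`, so a word
of length `< ι(w)` embeds into the last `ι(w) - 1` arches, hence into `z`; this yields the
complement `A · v₁`. Since `u[1]` is not the last letter `m` of `A`, it also occurs in `A` before
`m`; taking it there and the rest of `u` from `z` yields a complement whose prefix of length
`|A| - 1` contains `m`, whereas the prefix of `A · v₁` of that length is `A` without its last
letter, which does not contain `m`. -/

section Shuffle

variable {α : Type*} {u v w : List α}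

theorem InShuffle.nil : InShuffle ([] : List α) [] [] :=
  ⟨rfl, Fin.elim0, Fin.elim0, ⟨fun i => i.elim0, fun i => i.elim0⟩,
    ⟨fun i => i.elim0, fun i => i.elim0⟩, fun i => i.elim0⟩

theorem InShuffle.symm (h : InShuffle u v w) : InShuffle v u w := by
  obtain ⟨hlen, e₁, e₂, h₁, h₂, hdisj⟩ := h
  exact ⟨by omega, e₂, e₁, h₂, h₁, fun i j => (hdisj j i).symm⟩

theorem InShuffle.cons_left (a : α) (h : InShuffle u v w) : InShuffle (a :: u) v (a :: w) := by
  obtain ⟨hlen, e₁, e₂, ⟨mono₁, get₁⟩, ⟨mono₂, get₂⟩, hdisj⟩ := h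
  refine ⟨by simp [hlen]; omega, Fin.cons 0 (Fin.succ ∘ e₁), Fin.succ ∘ e₂,
    ⟨Fin.strictMono_cons.mpr ⟨fun _ => Fin.succ_pos _, Fin.strictMono_succ.comp mono₁⟩, ?_⟩,
    ⟨Fin.strictMono_succ.comp mono₂, fun j => get₂ j⟩, ?_⟩
  · intro i
    cases i using Fin.cases with
    | zero => rfl
    | succ i => exact get₁ i
  · intro i j
    cases i using Fin.cases with
    | zero => exact (Fin.succ_ne_zero _).symm
    | succ i => exact fun h => hdisj i j (Fin.succ_injective _ h)

theorem InShuffle.cons_right (a : α) (h : InShuffle u v w) : InShuffle u (a :: v) (a :: w) :=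
  (h.symm.cons_left a).symm

theorem InShuffle.append_right (s : List α) (h : InShuffle u v w) :
    InShuffle u (s ++ v) (s ++ w) := by
  induction s with
  | nil => exact h
  | cons a s ih => exact ih.cons_right a

theorem List.Sublist.exists_inShuffle (h : u.Sublist w) : ∃ v, InShuffle u v w := by
  induction h with
  | slnil => exact ⟨[], .nil⟩
  | cons a _ ih => obtain ⟨v, hv⟩ := ih; exact ⟨a :: v, hv.cons_right a⟩
  | cons_cons a _ ih => obtain ⟨v, hv⟩ := ih; exact ⟨v, hv.cons_left a⟩

theorem InShuffle.sublist_right (h : InShuffle u v w) : v.Sublist w := by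
  obtain ⟨-, -, e₂, -, ⟨mono, get⟩, -⟩ := h
  exact List.sublist_iff_exists_fin_orderEmbedding_get_eq.mpr ⟨.ofStrictMono e₂ mono, get⟩

theorem compSet_finite (w u : List α) : (CompSet w u).Finite :=
  (List.finite_toSet w.sublists).subset fun _ hv => List.mem_sublists.mpr hv.sublist_right

end Shuffle

theorem List.sublist_flatten_of_forall_mem {α : Type*} :
    ∀ {u : List α} {L : List (List α)}, u.length ≤ L.length →
      (∀ x ∈ u, ∀ A ∈ L, x ∈ A) → u.Sublist L.flatten
  | [], _, _, _ => List.nil_sublist _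
  | _ :: _, [], hlen, _ => absurd hlen (by simp)
  | x :: u, A :: L, hlen, hmem => by
      rw [List.flatten_cons, ← List.singleton_append]
      exact (List.singleton_sublist.mpr (hmem x (by simp) A (by simp))).append
        (sublist_flatten_of_forall_mem (by simpa using hlen)
          fun y hy B hB => hmem y (by simp [hy]) B (by simp [hB]))

theorem List.cons_append_ne_append_cons {α : Type*} {x m : α} {t v₁ v₂ : List α}
    (hm : m ∉ x :: t) : x :: t ++ v₁ ≠ t ++ m :: v₂ := by
  intro h
  have hprefix : x :: t = t ++ [m] :=
    (List.append_inj (s₂ := t ++ [m]) (by simpa using h) (by simp)).1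
  exact hm (hprefix ▸ List.mem_concat_self ..)

theorem List.exists_eq_append_cons_append_getLast {α : Type*} {A : List α} (hA : A ≠ [])
    {x : α} (hx : x ∈ A) (hx_last : x ≠ A.getLast hA) (hlast : A.getLast hA ∉ A.dropLast) :
    ∃ s t, A = s ++ x :: t ++ [A.getLast hA] ∧ A.getLast hA ∉ x :: t := by
  obtain ⟨s, t, hst⟩ := List.append_of_mem (List.mem_dropLast_of_mem_of_ne_getLast hx hx_last)
  refine ⟨s, t, by rw [← hst, List.dropLast_append_getLast], fun h => hlast ?_⟩
  rw [hst]
  exact List.mem_append_right s h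

theorem one_lt_ncard_compSet_append {α : Type*} {s t z u' : List α} {x m : α}
    (hm : m ∉ x :: t) (hz : (x :: u').Sublist z) :
    1 < (CompSet (s ++ x :: t ++ [m] ++ z) (x :: u')).ncard := by
  obtain ⟨v₁, hv₁⟩ := hz.exists_inShuffle
  obtain ⟨v₂, hv₂⟩ := ((List.sublist_cons_self x u').trans hz).exists_inShuffle
  have h₁ : s ++ x :: t ++ [m] ++ v₁ ∈ CompSet (s ++ x :: t ++ [m] ++ z) (x :: u') :=
    hv₁.append_right _
  have h₂ : s ++ (t ++ m :: v₂) ∈ CompSet (s ++ x :: t ++ [m] ++ z) (x :: u') := by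
    show InShuffle _ _ _
    simpa using ((hv₂.append_right (t ++ [m])).cons_left x).append_right s
  refine (Set.one_lt_ncard (compSet_finite _ _)).mpr ⟨_, h₁, _, h₂, ?_⟩
  simpa using List.cons_append_ne_append_cons hm

theorem stmt9_general {α : Type*} (w : List α) (F : ArchFact w)
    (u : List α) (hu : u ≠ []) (husub : u.Sublist w)
    (hlen : u.length < F.arches.length)
    (m1 : α) (hm1 : F.modus.head? = some m1)
    (hhead : u.head hu ≠ m1) :
    1 < (CompSet w u).ncard := by
  obtain ⟨arches, rest, hjoin, hne, halph, hlast, _⟩ := F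
  obtain _ | ⟨A, As⟩ := arches
  · simp at hlen
  obtain ⟨x, u', rfl⟩ := List.exists_cons_of_ne_nil hu
  have hA : A ≠ [] := hne A (by simp)
  have hA_last : A.getLast hA = m1 := by simpa [ArchFact.modus] using hm1
  obtain ⟨s, t, hA_eq, hm⟩ := List.exists_eq_append_cons_append_getLast hA
    (halph A (by simp) x (husub.subset (by simp))) (by simpa [hA_last] using hhead)
    (hlast A (by simp) hA)
  have hu_tail : (x :: u').Sublist (As.flatten ++ rest) :=
    (List.sublist_flatten_of_forall_mem (by simpa using hlen)
      fun y hy B hB => halph B (by simp [hB]) y (husub.subset hy)).trans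
      (List.sublist_append_left _ _)
  have hw : w = A ++ (As.flatten ++ rest) := by rw [← hjoin, List.flatten_cons, List.append_assoc]
  rw [hw, hA_eq]
  exact one_lt_ncard_compSet_append hm hu_tail

/-- If `ι(w) ≥ 2` (the arch factorisation has at least two arches), `u` is a
nonempty scattered factor of `w` with `|u| < ι(w)` and `u[1] ≠ m(w)[1]`, then
`|C(w,u)| > 1`. -/
theorem stmt9 {α : Type*} (w : List α) (F : ArchFact w)
    (hk : 2 ≤ F.arches.length)
    (u : List α) (hu : u ≠ []) (husub : u.Sublist w)
    (hlen : u.length < F.arches.length)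
    (m1 : α) (hm1 : F.modus.head? = some m1)
    (hhead : u.head hu ≠ m1) :
    1 < (CompSet w u).ncard :=
  stmt9_general w F u hu husub hlen m1 hm1 hhead
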